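/- arXiv:2404.11307 — 2 statements merged into one kernel-verified Lean document; each statement's English description precedes it below -/
import Mathlib

section
/- Let G be a finite abelian group and S a zero-sum free sequence over G with |Σ(S)| = |S| + |supp(S)| − 1. Then S has one of the following forms: (1) S = g^{|S|} with g ≠ 0 and ord(g) ≥ |S|+1; (2) S = g₁·g₂ with g₁, g₂ ∈ G∖{0} distinct; (3) S = g^{|S|−1}·(2g) with g ≠ 0, |S| ≥ 3, and ord(g) ≥ |S|+2; (4) S = g₁·g₂·(g₁+g₂) with g₁, g₂ ∈ G∖{0}, 2g₁ ≠ 0, 2g₂ = 0, and 2g₁ + g₂ ≠ 0. -/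
/-- Set of sums of nonempty subsequences of `S`. -/
def subSums {G : Type*} [AddCommMonoid G] (S : Multiset G) : Set G :=
  {x | ∃ T : Multiset G, T ≤ S ∧ T ≠ 0 ∧ T.sum = x}

/-- Set of sums of subsequences of `S` of length exactly `k`. -/
def sumsLen {G : Type*} [AddCommMonoid G] (k : ℕ) (S : Multiset G) : Set G :=
  {x | ∃ T : Multiset G, T ≤ S ∧ Multiset.card T = k ∧ T.sum = x}

/-- Set of sums of subsequences of `S` of length at least `k`. -/
def sumsGe {G : Type*} [AddCommMonoid G] (k : ℕ) (S : Multiset G) : Set G :=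
  {x | ∃ T : Multiset G, T ≤ S ∧ k ≤ Multiset.card T ∧ T.sum = x}

set_option linter.unusedSectionVars false
set_option maxHeartbeats 1000000

section Main
variable {G : Type*} [AddCommGroup G] [Fintype G] [DecidableEq G]

variable {G : Type*} [AddCommGroup G] [Fintype G] [DecidableEq G]

lemma mem_subSums {S : Multiset G} {x : G} :
    x ∈ subSums S ↔ ∃ T : Multiset G, T ≤ S ∧ T ≠ 0 ∧ T.sum = x := Iff.rfl

lemma subSums_mono {T S : Multiset G} (h : T ≤ S) : subSums T ⊆ subSums S := by
  rintro x ⟨U, hU, hU0, rfl⟩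
  exact ⟨U, hU.trans h, hU0, rfl⟩

lemma mem_subSums_of_mem {S : Multiset G} {a : G} (h : a ∈ S) : a ∈ subSums S :=
  ⟨{a}, by simpa using h, by simp, by simp⟩

lemma sum_mem_subSums {S : Multiset G} (h : S ≠ 0) : S.sum ∈ subSums S :=
  ⟨S, le_refl _, h, rfl⟩

lemma ne_zero_of_mem_subSums {S : Multiset G} {x : G} (h0 : (0:G) ∉ subSums S)
    (hx : x ∈ subSums S) : x ≠ 0 := fun h => h0 (h ▸ hx)

lemma subSums_zero : subSums (0 : Multiset G) = ∅ := by
  ext x; simp only [mem_subSums, Set.mem_empty_iff_false, iff_false]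
  rintro ⟨T, hT, hT0, -⟩
  exact hT0 (Multiset.le_zero.mp hT)

lemma sum_notMem_erase {S : Multiset G} {c : G} (h0 : (0:G) ∉ subSums S) (hc : c ∈ S) :
    S.sum ∉ subSums (S.erase c) := by
  rintro ⟨U, hU, hU0, hUs⟩
  have hUS : U ≤ S := hU.trans (Multiset.erase_le c S)
  have h1 : Multiset.card U ≤ Multiset.card (S.erase c) := Multiset.card_mono hU
  have h2 : Multiset.card (S.erase c) = Multiset.card S - 1 := Multiset.card_erase_of_mem hc
  have h3 : 0 < Multiset.card S := Multiset.card_pos_iff_exists_mem.mpr ⟨c, hc⟩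
  have hne : S - U ≠ 0 := by
    intro h
    have h4 := congrArg Multiset.card h
    rw [Multiset.card_sub hUS, Multiset.card_zero] at h4
    omega
  apply h0
  refine ⟨S - U, Multiset.sub_le_self S U, hne, ?_⟩
  have hadd : S - U + U = S := tsub_add_cancel_of_le hUS
  have := congrArg Multiset.sum hadd
  rw [Multiset.sum_add] at this
  rw [hUs] at this
  -- this : (S - U).sum + S.sum = S.sum
  have h5 : (S - U).sum + S.sum = 0 + S.sum := by rw [this, zero_add]
  exact add_right_cancel h5

lemma add_mem_subSums {S : Multiset G} {c x : G} (hc : c ∈ S)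
    (hx : x ∈ subSums (S.erase c)) : x + c ∈ subSums S := by
  obtain ⟨T, hT, hT0, rfl⟩ := hx
  refine ⟨c ::ₘ T, ?_, by simp, by simp [add_comm]⟩
  calc c ::ₘ T ≤ c ::ₘ S.erase c := Multiset.cons_le_cons c hT
  _ = S := Multiset.cons_erase hc

lemma le_cons_iff' {T M : Multiset G} {a : G} :
    T ≤ a ::ₘ M ↔ (T ≤ M ∨ ∃ T', T' ≤ M ∧ T = a ::ₘ T') := by
  constructor
  · intro h
    by_cases ha : a ∈ T
    · right
      refine ⟨T.erase a, ?_, (Multiset.cons_erase ha).symm⟩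
      have := Multiset.erase_le_erase a h
      rwa [Multiset.erase_cons_head] at this
    · left; exact (Multiset.le_cons_of_notMem ha).mp h
  · rintro (h | ⟨T', hT', rfl⟩)
    · exact h.trans (Multiset.le_cons_self M a)
    · exact Multiset.cons_le_cons a hT'



lemma sum_add_notMem {S : Multiset G} (h0 : (0:G) ∉ subSums S) {b : G} (hb : b ∈ S)
    (bad : ∀ x ∈ subSums S, x ≠ S.sum → x ∈ subSums (S.erase b)) :
    S.sum + b ∉ subSums S := by
  intro hσb
  have step : ∀ y ∈ subSums S, y + b ∈ subSums S := by
    intro y hy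
    by_cases hyσ : y = S.sum
    · rw [hyσ]; exact hσb
    · exact add_mem_subSums hb (bad y hy hyσ)
  have key : ∀ j : ℕ, b + j • b ∈ subSums S := by
    intro j
    induction j with
    | zero => simpa using mem_subSums_of_mem hb
    | succ m ih =>
        have h2 := step _ ih
        have : b + (m + 1) • b = b + m • b + b := by
          rw [add_nsmul, one_nsmul]; abel
        rw [this]; exact h2
  have hd : 0 < addOrderOf b := addOrderOf_pos b
  have h3 := key (addOrderOf b - 1)
  have h4 : b + (addOrderOf b - 1) • b = (addOrderOf b) • b := by
    have : addOrderOf b = (addOrderOf b - 1) + 1 := by omega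
    rw [this, add_nsmul, one_nsmul]
    abel
  rw [h4, addOrderOf_nsmul_eq_zero b] at h3
  exact h0 h3

lemma pair_lemma {S : Multiset G} (h0 : (0:G) ∉ subSums S)
    {a b : G} (ha : a ∈ S) (hb : b ∈ S) (hab : a ≠ b) :
    ∃ c, (c = a ∨ c = b) ∧ c ∈ S ∧
      ∃ x ∈ subSums S, x ≠ S.sum ∧ x ∉ subSums (S.erase c) := by
  by_contra hcon
  push_neg at hcon
  have bada : ∀ x ∈ subSums S, x ≠ S.sum → x ∈ subSums (S.erase a) :=
    fun x hx hxs => hcon a (Or.inl rfl) ha x hx hxs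
  have badb : ∀ x ∈ subSums S, x ≠ S.sum → x ∈ subSums (S.erase b) :=
    fun x hx hxs => hcon b (Or.inr rfl) hb x hx hxs
  have hσ : a ::ₘ S.erase a = S := Multiset.cons_erase ha
  have hea : S.erase a ≠ 0 := by
    intro h
    have : b ∈ S.erase a := (Multiset.mem_erase_of_ne (Ne.symm hab)).2 hb
    rw [h] at this; simp at this
  set x₀ := (S.erase a).sum with hx₀
  have hx₀mem : x₀ ∈ subSums S :=
    subSums_mono (Multiset.erase_le a S) (sum_mem_subSums hea)
  have hsum : x₀ + a = S.sum := by
    rw [← hσ, Multiset.sum_cons]; abel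
  have hane : a ≠ 0 := by
    intro h; exact h0 (h ▸ mem_subSums_of_mem ha)
  have hbne : b ≠ 0 := by
    intro h; exact h0 (h ▸ mem_subSums_of_mem hb)
  have hx₀σ : x₀ ≠ S.sum := by
    intro h; rw [← h] at hsum; apply hane; exact (left_eq_add.mp hsum.symm)
  have hx₁mem : x₀ + b ∈ subSums S := add_mem_subSums hb (badb x₀ hx₀mem hx₀σ)
  have hx₁σ : x₀ + b ≠ S.sum := by
    intro h
    rw [← hsum] at h
    exact hab ((add_left_cancel h).symm)
  have hx₂mem : x₀ + b + a ∈ subSums S := add_mem_subSums ha (bada _ hx₁mem hx₁σ)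
  have : S.sum + b = x₀ + b + a := by rw [← hsum]; abel
  rw [← this] at hx₂mem
  exact sum_add_notMem h0 hb badb hx₂mem

lemma nsmul_mem_subSums {n : ℕ} {g : G} {i : ℕ} (h1 : 1 ≤ i) (h2 : i ≤ n) :
    i • g ∈ subSums (Multiset.replicate n g) := by
  refine ⟨Multiset.replicate i g, (Multiset.replicate_le_replicate g).2 h2, ?_,
    Multiset.sum_replicate i g⟩
  intro h
  have := congrArg Multiset.card h
  simp [Multiset.card_replicate] at this
  omega

lemma replicate_subSums_card {n : ℕ} {g : G} (hn : 0 < n)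
    (h0 : (0:G) ∉ subSums (Multiset.replicate n g)) :
    n ≤ (subSums (Multiset.replicate n g)).ncard := by
  classical
  set S := Multiset.replicate n g
  have hinj : Set.InjOn (fun i : ℕ => i • g) ↑(Finset.Icc 1 n) := by
    intro i hi j hj hij
    simp only [Finset.coe_Icc, Set.mem_Icc] at hi hj
    simp only at hij
    by_contra hne
    rcases Nat.lt_or_ge i j with h | h
    · have : j • g = i • g + (j - i) • g := by
        rw [← add_nsmul]; congr 1; omega
      rw [hij] at this
      have hz : (j - i) • g = 0 := left_eq_add.mp this
      exact h0 (hz ▸ nsmul_mem_subSums (by omega) (by omega))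
    · have h' : i ≠ j := hne
      have hlt : j < i := by omega
      have : i • g = j • g + (i - j) • g := by
        rw [← add_nsmul]; congr 1; omega
      rw [← hij] at this
      have hz : (i - j) • g = 0 := left_eq_add.mp this
      exact h0 (hz ▸ nsmul_mem_subSums (by omega) (by omega))
  have hsub : ↑((Finset.Icc 1 n).image (fun i : ℕ => i • g)) ⊆ subSums S := by
    intro x hx
    simp only [Finset.coe_image, Set.mem_image, Finset.coe_Icc, Set.mem_Icc] at hx
    obtain ⟨i, ⟨h1, h2⟩, rfl⟩ := hx
    exact nsmul_mem_subSums h1 h2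
  calc n = ((Finset.Icc 1 n).image (fun i : ℕ => i • g)).card := by
            rw [Finset.card_image_of_injOn hinj, Nat.card_Icc]; omega
  _ = (↑((Finset.Icc 1 n).image (fun i : ℕ => i • g)) : Set G).ncard := (Set.ncard_coe_finset _).symm
  _ ≤ (subSums S).ncard := Set.ncard_le_ncard hsub (Set.toFinite _)

lemma eq_replicate_of_toFinset_card_one {S : Multiset G} (h : S.toFinset.card = 1) :
    ∃ g : G, S = Multiset.replicate (Multiset.card S) g := by
  obtain ⟨g, hg⟩ := Finset.card_eq_one.mp h
  refine ⟨g, Multiset.eq_replicate_card.mpr fun b hb => ?_⟩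
  have : b ∈ S.toFinset := Multiset.mem_toFinset.mpr hb
  rw [hg] at this; simpa using this

lemma erase_toFinset_card {S : Multiset G} {c : G} (hc : c ∈ S) :
    S.toFinset.card ≤ (S.erase c).toFinset.card + 1 := by
  have hsub : S.toFinset ⊆ insert c (S.erase c).toFinset := by
    intro x hx
    rcases eq_or_ne x c with rfl | hxc
    · exact Finset.mem_insert_self _ _
    · refine Finset.mem_insert_of_mem (Multiset.mem_toFinset.mpr ?_)
      exact (Multiset.mem_erase_of_ne hxc).2 (Multiset.mem_toFinset.mp hx)
  calc S.toFinset.card ≤ (insert c (S.erase c).toFinset).card := Finset.card_le_card hsub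
  _ ≤ (S.erase c).toFinset.card + 1 := Finset.card_insert_le _ _

lemma ncard_erase_add_two {S : Multiset G} (h0 : (0:G) ∉ subSums S) {c x : G} (hc : c ∈ S)
    (hx : x ∈ subSums S) (hxσ : x ≠ S.sum) (hxe : x ∉ subSums (S.erase c)) :
    (subSums (S.erase c)).ncard + 2 ≤ (subSums S).ncard := by
  have hσe : S.sum ∉ subSums (S.erase c) := sum_notMem_erase h0 hc
  have hS0 : S ≠ 0 := by rintro rfl; simp at hc
  have hsub : insert x (insert S.sum (subSums (S.erase c))) ⊆ subSums S := by
    intro y hy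
    rcases hy with rfl | hy
    · exact hx
    · rcases hy with rfl | hy
      · exact sum_mem_subSums hS0
      · exact subSums_mono (Multiset.erase_le c S) hy
  have h1 : (insert x (insert S.sum (subSums (S.erase c)))).ncard
      = (subSums (S.erase c)).ncard + 2 := by
    rw [Set.ncard_insert_of_notMem (by simp [hxσ, hxe]) ((Set.toFinite _).insert _),
        Set.ncard_insert_of_notMem hσe (Set.toFinite _)]
  rw [← h1]
  exact Set.ncard_le_ncard hsub (Set.toFinite _)

lemma card_bound : ∀ (n : ℕ) (S : Multiset G), Multiset.card S ≤ n → (0:G) ∉ subSums S →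
    Multiset.card S + S.toFinset.card ≤ (subSums S).ncard + 1 := by
  intro n
  induction n with
  | zero =>
      intro S hS h0
      have : S = 0 := by
        rw [← Multiset.card_eq_zero]; omega
      subst this; simp
  | succ n ih =>
      intro S hS h0
      rcases Nat.lt_or_ge S.toFinset.card 2 with hk | hk
      · rcases Nat.lt_or_ge S.toFinset.card 1 with hk0 | hk1
        · have hk0' : S.toFinset.card = 0 := by omega
          have : S = 0 := by
            rw [← Multiset.toFinset_eq_empty]; exact Finset.card_eq_zero.mp hk0'
          subst this; simp
        · have hk1' : S.toFinset.card = 1 := by omega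
          obtain ⟨g, hg⟩ := eq_replicate_of_toFinset_card_one hk1'
          have hn0 : 0 < Multiset.card S := by
            by_contra h
            have : S = 0 := by rw [← Multiset.card_eq_zero]; omega
            rw [this] at hk1'; simp at hk1'
          have := replicate_subSums_card (n := Multiset.card S) (g := g) hn0 (by rw [← hg]; exact h0)
          rw [← hg] at this
          omega
      · obtain ⟨a, ha, b, hb, hab⟩ := Finset.one_lt_card.mp hk
        have haS : a ∈ S := Multiset.mem_toFinset.mp ha
        have hbS : b ∈ S := Multiset.mem_toFinset.mp hb
        obtain ⟨c, -, hcS, x, hx, hxσ, hxe⟩ := pair_lemma h0 haS hbS hab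
        have h2 := ncard_erase_add_two h0 hcS hx hxσ hxe
        have h3 := erase_toFinset_card hcS
        have hcard : Multiset.card (S.erase c) = Multiset.card S - 1 :=
          Multiset.card_erase_of_mem hcS
        have hpos : 0 < Multiset.card S := Multiset.card_pos_iff_exists_mem.mpr ⟨c, hcS⟩
        have h0' : (0:G) ∉ subSums (S.erase c) :=
          fun h => h0 (subSums_mono (Multiset.erase_le c S) h)
        have ihe := ih (S.erase c) (by omega) h0'
        omega



lemma interval_lemma {g c : G} {M : ℕ} (hM : 2 ≤ M) {P : Set G}
    (hP : ∀ x, x ∈ P ↔ (∃ i, 1 ≤ i ∧ i ≤ M ∧ x = i • g) ∨ (∃ i, i ≤ M ∧ x = c + i • g))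
    (h0 : (0:G) ∉ P) (hcard : P.ncard = M + 2) :
    c = 2 • g ∧ M + 3 ≤ addOrderOf g := by
  classical
  set d := addOrderOf g with hd
  have hdpos : 0 < d := addOrderOf_pos g
  have nz1 : ∀ i : ℕ, 1 ≤ i → i ≤ M → i • g ≠ 0 := by
    intro i h1 h2 h
    exact h0 (h ▸ (hP (i • g)).mpr (Or.inl ⟨i, h1, h2, rfl⟩))
  have nz2 : ∀ i : ℕ, i ≤ M → c + i • g ≠ 0 := by
    intro i h2 h
    exact h0 (h ▸ (hP (c + i • g)).mpr (Or.inr ⟨i, h2, rfl⟩))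
  have hdg : d • g = 0 := addOrderOf_nsmul_eq_zero g
  have hdM : M + 1 ≤ d := by
    by_contra h
    exact nz1 d hdpos (by omega) hdg
  have hinj : ∀ i j : ℕ, i < d → j < d → i • g = j • g → i = j := by
    intro i j hi hj hij
    have h1 : i % d = j % d := nsmul_eq_nsmul_iff_modEq.mp hij
    rwa [Nat.mod_eq_of_lt hi, Nat.mod_eq_of_lt hj] at h1
  set A1 : Finset G := (Finset.Icc 1 M).image (fun i : ℕ => i • g) with hA1
  set A2 : Finset G := (Finset.Icc 0 M).image (fun i : ℕ => c + i • g) with hA2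
  have hPA : P = ↑(A1 ∪ A2) := by
    ext x
    rw [Finset.coe_union, Set.mem_union, hP]
    simp only [hA1, hA2, Finset.mem_coe, Finset.mem_image, Finset.mem_Icc]
    constructor
    · rintro (⟨i, h1, h2, rfl⟩ | ⟨i, h2, rfl⟩)
      · exact Or.inl ⟨i, ⟨h1, h2⟩, rfl⟩
      · exact Or.inr ⟨i, ⟨Nat.zero_le i, h2⟩, rfl⟩
    · rintro (⟨i, hi, rfl⟩ | ⟨i, hi, rfl⟩)
      · exact Or.inl ⟨i, hi.1, hi.2, rfl⟩
      · exact Or.inr ⟨i, hi.2, rfl⟩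
  have hcardU : (A1 ∪ A2).card = M + 2 := by
    rw [← Set.ncard_coe_finset, ← hPA, hcard]
  have hc1 : A1.card = M := by
    rw [hA1, Finset.card_image_of_injOn, Nat.card_Icc]
    · omega
    · intro i hi j hj hij
      simp only [Finset.coe_Icc, Set.mem_Icc] at hi hj
      exact hinj i j (by omega) (by omega) hij
  have hc2 : A2.card = M + 1 := by
    rw [hA2, Finset.card_image_of_injOn, Nat.card_Icc]
    · omega
    · intro i hi j hj hij
      simp only [Finset.coe_Icc, Set.mem_Icc] at hi hj
      simp only [add_right_inj] at hij
      exact hinj i j (by omega) (by omega) hij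
  have hinter : 0 < (A1 ∩ A2).card := by
    have := Finset.card_union_add_card_inter A1 A2
    omega
  obtain ⟨x, hx⟩ := Finset.card_pos.mp hinter
  rw [Finset.mem_inter] at hx
  obtain ⟨hx1, hx2⟩ := hx
  simp only [hA1, Finset.mem_image, Finset.mem_Icc] at hx1
  simp only [hA2, Finset.mem_image, Finset.mem_Icc] at hx2
  obtain ⟨j, hj, hxj⟩ := hx1
  obtain ⟨i, hi, hxi⟩ := hx2
  have hd1 : (d - 1) • g = -g := by
    apply eq_neg_of_add_eq_zero_left
    have : (d - 1) • g + g = d • g := by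
      rw [← succ_nsmul]; congr 1; omega
    rw [hdg] at this; exact this
  set w := (j + i * (d - 1)) % d with hw
  have hcw : c = w • g := by
    have h2 : j • g = c + i • g := by rw [hxj, hxi]
    have h3 : (j + i * (d - 1)) • g = j • g + i • ((d - 1) • g) := by
      rw [add_nsmul, mul_nsmul']
    have h4 : w • g = (j + i * (d - 1)) • g :=
      nsmul_eq_nsmul_iff_modEq.mpr (Nat.mod_modEq _ d)
    rw [h4, h3, hd1, h2, smul_neg]
    abel
  have hwlt : w < d := Nat.mod_lt _ hdpos
  have hw1 : 1 ≤ w := by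
    rcases Nat.eq_zero_or_pos w with h | h
    · exfalso
      apply nz2 0 (by omega)
      rw [hcw, h]; simp
    · exact h
  have hwM : w + M < d := by
    by_contra h
    push_neg at h
    apply nz2 (d - w) (by omega)
    rw [hcw, ← add_nsmul]
    have : w + (d - w) = d := by omega
    rw [this, hdg]
  have hA2' : A2 = (Finset.Icc w (w + M)).image (fun i : ℕ => i • g) := by
    ext y
    simp only [hA2, Finset.mem_image, Finset.mem_Icc]
    constructor
    · rintro ⟨i', hi', rfl⟩
      refine ⟨w + i', ⟨by omega, by omega⟩, ?_⟩
      rw [add_nsmul, ← hcw]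
    · rintro ⟨t, ht, rfl⟩
      refine ⟨t - w, by omega, ?_⟩
      rw [hcw, ← add_nsmul]
      congr 1
      omega
  have hunion : (A1 ∪ A2).card = ((Finset.Icc 1 M) ∪ (Finset.Icc w (w + M))).card := by
    rw [hA2', hA1, ← Finset.image_union]
    rw [Finset.card_image_of_injOn]
    intro i' hi' j' hj' hij'
    simp only [Finset.coe_union, Set.mem_union, Finset.coe_Icc, Set.mem_Icc] at hi' hj'
    apply hinj i' j' (by omega) (by omega) hij'
  have hIcc : ((Finset.Icc 1 M) ∪ (Finset.Icc w (w + M))).card = M + 2 := by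
    rw [← hunion, hcardU]
  have hints := Finset.card_union_add_card_inter (Finset.Icc 1 M) (Finset.Icc w (w + M))
  have hIJ : Finset.Icc 1 M ∩ Finset.Icc w (w + M) = Finset.Icc w M := by
    ext t
    simp only [Finset.mem_inter, Finset.mem_Icc]
    omega
  rw [hIJ, hIcc] at hints
  simp only [Nat.card_Icc] at hints
  have hw2 : w = 2 := by omega
  constructor
  · rw [hcw, hw2]
  · omega


lemma subSums_cons {c : G} {M : Multiset G} {x : G} :
    x ∈ subSums (c ::ₘ M) ↔ x ∈ subSums M ∨ x = c ∨ ∃ y ∈ subSums M, x = c + y := by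
  constructor
  · rintro ⟨T, hT, hT0, rfl⟩
    rcases le_cons_iff'.mp hT with h | ⟨T', hT', rfl⟩
    · exact Or.inl ⟨T, h, hT0, rfl⟩
    · rcases eq_or_ne T' 0 with rfl | hT'0
      · right; left; simp
      · right; right
        exact ⟨T'.sum, ⟨T', hT', hT'0, rfl⟩, by rw [Multiset.sum_cons]⟩
  · rintro (⟨T, h, h0, rfl⟩ | rfl | ⟨y, ⟨T, h, h0, rfl⟩, rfl⟩)
    · exact ⟨T, h.trans (Multiset.le_cons_self M c), h0, rfl⟩
    · exact ⟨{x}, by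
        have : ({x} : Multiset G) = x ::ₘ 0 := rfl
        rw [this]
        exact Multiset.cons_le_cons x (Multiset.zero_le M), by simp, by simp⟩
    · exact ⟨c ::ₘ T, Multiset.cons_le_cons c h, by simp, by rw [Multiset.sum_cons]⟩

lemma mem_subSums_replicate {g : G} {m : ℕ} {x : G} :
    x ∈ subSums (Multiset.replicate m g) ↔ ∃ i, 1 ≤ i ∧ i ≤ m ∧ x = i • g := by
  constructor
  · rintro ⟨T, hT, hT0, rfl⟩
    obtain ⟨i, him, rfl⟩ := Multiset.le_replicate_iff.mp hT
    refine ⟨i, ?_, him, Multiset.sum_replicate i g⟩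
    rcases Nat.eq_zero_or_pos i with rfl | h
    · simp at hT0
    · exact h
  · rintro ⟨i, h1, h2, rfl⟩
    exact nsmul_mem_subSums h1 h2

lemma mem_subSums_rep2 {g : G} {m : ℕ} (hm : 1 ≤ m) {x : G} :
    x ∈ subSums ((2 • g) ::ₘ Multiset.replicate m g) ↔
      ∃ i, 1 ≤ i ∧ i ≤ m + 2 ∧ x = i • g := by
  rw [subSums_cons]
  constructor
  · rintro (h | rfl | ⟨y, hy, rfl⟩)
    · obtain ⟨i, h1, h2, rfl⟩ := mem_subSums_replicate.mp h
      exact ⟨i, h1, by omega, rfl⟩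
    · exact ⟨2, by omega, by omega, rfl⟩
    · obtain ⟨i, h1, h2, rfl⟩ := mem_subSums_replicate.mp hy
      exact ⟨i + 2, by omega, by omega, by rw [add_nsmul]; abel⟩
  · rintro ⟨i, h1, h2, rfl⟩
    rcases le_or_gt i m with h | h
    · exact Or.inl (mem_subSums_replicate.mpr ⟨i, h1, h, rfl⟩)
    · rcases Nat.lt_or_ge i 3 with h3 | h3
      · have hi2 : i = 2 := by omega
        subst hi2
        exact Or.inr (Or.inl rfl)
      · refine Or.inr (Or.inr ⟨(i - 2) • g,
          mem_subSums_replicate.mpr ⟨i - 2, by omega, by omega, rfl⟩, ?_⟩)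
        rw [← add_nsmul]
        congr 1
        omega

lemma hP_combine {g c : G} {S' : Multiset G} {M : ℕ}
    (h' : ∀ x, x ∈ subSums S' ↔ ∃ i, 1 ≤ i ∧ i ≤ M ∧ x = i • g) (x : G) :
    x ∈ subSums (c ::ₘ S') ↔
      (∃ i, 1 ≤ i ∧ i ≤ M ∧ x = i • g) ∨ (∃ i, i ≤ M ∧ x = c + i • g) := by
  rw [subSums_cons]
  constructor
  · rintro (h | rfl | ⟨y, hy, rfl⟩)
    · exact Or.inl ((h' x).mp h)
    · exact Or.inr ⟨0, Nat.zero_le M, by simp⟩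
    · obtain ⟨i, h1, h2, rfl⟩ := (h' y).mp hy
      exact Or.inr ⟨i, h2, rfl⟩
  · rintro (⟨i, h1, h2, rfl⟩ | ⟨i, h2, rfl⟩)
    · exact Or.inl ((h' _).mpr ⟨i, h1, h2, rfl⟩)
    · rcases Nat.eq_zero_or_pos i with rfl | hp
      · right; left; simp
      · right; right
        exact ⟨i • g, (h' _).mpr ⟨i, hp, h2, rfl⟩, rfl⟩


lemma rot3 (x y z : G) : x ::ₘ y ::ₘ z ::ₘ (0 : Multiset G) = y ::ₘ z ::ₘ x ::ₘ 0 := by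
  rw [Multiset.cons_swap x y, Multiset.cons_swap x z]

lemma triple_case {a b c : G} (hS0 : (0:G) ∉ subSums (c ::ₘ a ::ₘ ({b} : Multiset G)))
    (hab : a ≠ b) (hca : c ≠ a) (hcb : c ≠ b)
    (hcard : (subSums (c ::ₘ a ::ₘ ({b}:Multiset G))).ncard ≤ 5) :
    ∃ g₁ g₂ : G, g₁ ≠ 0 ∧ g₂ ≠ 0 ∧ 2 • g₁ ≠ 0 ∧ 2 • g₂ = 0 ∧ 2 • g₁ + g₂ ≠ 0 ∧
      (c ::ₘ a ::ₘ ({b} : Multiset G)) = ({g₁, g₂, g₁ + g₂} : Multiset G) := by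
  set S : Multiset G := c ::ₘ a ::ₘ ({b} : Multiset G) with hS
  set P : Set G := subSums S with hPdef
  have ma : a ∈ P := mem_subSums_of_mem (by simp [hS])
  have mb : b ∈ P := mem_subSums_of_mem (by simp [hS])
  have mc : c ∈ P := mem_subSums_of_mem (by simp [hS])
  have hσsum : S.sum = c + (a + b) := by simp [hS]
  have mσ : c + (a + b) ∈ P := hσsum ▸ sum_mem_subSums (by simp [hS])
  have mab : a + b ∈ P := ⟨a ::ₘ {b}, Multiset.le_cons_self _ c, by simp, by simp⟩
  have mca : c + a ∈ P := ⟨c ::ₘ {a}, Multiset.cons_le_cons c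
      (Multiset.singleton_le.mpr (by simp)), by simp, by simp⟩
  have mcb : c + b ∈ P := ⟨c ::ₘ {b}, Multiset.cons_le_cons c (Multiset.le_cons_self _ a),
      by simp, by simp⟩
  have nza : a ≠ 0 := ne_zero_of_mem_subSums hS0 ma
  have nzb : b ≠ 0 := ne_zero_of_mem_subSums hS0 mb
  have nzc : c ≠ 0 := ne_zero_of_mem_subSums hS0 mc
  have nzab : a + b ≠ 0 := ne_zero_of_mem_subSums hS0 mab
  have nzca : c + a ≠ 0 := ne_zero_of_mem_subSums hS0 mca
  have nzcb : c + b ≠ 0 := ne_zero_of_mem_subSums hS0 mcb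
  have nzσ : c + (a + b) ≠ 0 := ne_zero_of_mem_subSums hS0 mσ
  -- distinctness of σ from singles
  have dσa : c + (a + b) ≠ a := by
    intro h
    apply nzcb
    have e : c + b = (c + (a + b)) - a := by abel
    rw [h] at e; simpa using e
  have dσb : c + (a + b) ≠ b := by
    intro h
    apply nzca
    have e : c + a = (c + (a + b)) - b := by abel
    rw [h] at e; simpa using e
  have dσc : c + (a + b) ≠ c := by
    intro h
    apply nzab
    have e : a + b = (c + (a + b)) - c := by abel
    rw [h] at e; simpa using e
  by_cases h1 : a + b = c
  · by_cases h2 : c + a = b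
    · -- Case A : g₁ = b, g₂ = a
      have e2a : a + a = 0 := by
        have e1 : a + a = (a + b) + (c + a) - (c + b) := by abel
        rw [h1, h2] at e1
        have e2 : c + b = b + c := by abel
        rw [e2] at e1; simpa using e1
      have eσ : c + (a + b) = b + b := by
        rw [← h1]
        have e1 : (a + b) + (a + b) = (a + a) + (b + b) := by abel
        rw [e1, e2a, zero_add]
      refine ⟨b, a, nzb, nza, ?_, ?_, ?_, ?_⟩
      · rw [two_nsmul]; rw [← eσ]; exact nzσ
      · rw [two_nsmul]; exact e2a
      · rw [two_nsmul]
        intro h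
        apply nzcb
        rw [← h1]
        have : (a + b) + b = (b + b) + a := by abel
        rw [this, h]
      · show S = b ::ₘ a ::ₘ {b + a}
        rw [hS, add_comm b a, ← h1]
        show (a+b) ::ₘ a ::ₘ b ::ₘ (0:Multiset G) = b ::ₘ a ::ₘ (a+b) ::ₘ 0
        rw [rot3 (a+b) a b, Multiset.cons_swap b a]
    · -- Case B : g₁ = a, g₂ = b
      -- eliminate c + b
      have hQ5 : ({a, b, c, c + (a+b), c + a} : Set G).ncard = 5 := by
        rw [Set.ncard_insert_of_notMem (by
            simp only [Set.mem_insert_iff, Set.mem_singleton_iff, not_or]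
            refine ⟨hab, fun h => hca h.symm, fun h => dσa h.symm, fun h => nzc ?_⟩
            have e : c = (c + a) - a := by abel
            rw [← h] at e; simpa using e) (Set.toFinite _),
          Set.ncard_insert_of_notMem (by
            simp only [Set.mem_insert_iff, Set.mem_singleton_iff, not_or]
            refine ⟨fun h => hcb h.symm, fun h => dσb h.symm, fun h => h2 h.symm⟩) (Set.toFinite _),
          Set.ncard_insert_of_notMem (by
            simp only [Set.mem_insert_iff, Set.mem_singleton_iff, not_or]
            refine ⟨fun h => dσc h.symm, fun h => nza ?_⟩
            have e : a = (c + a) - c := by abel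
            rw [← h] at e; simpa using e) (Set.toFinite _),
          Set.ncard_insert_of_notMem (by
            simp only [Set.mem_singleton_iff]
            intro h
            apply nzb
            have e : b = (c + (a + b)) - (c + a) := by abel
            rw [h] at e; simpa using e) (Set.toFinite _),
          Set.ncard_singleton]
      have hQP : ({a, b, c, c + (a+b), c + a} : Set G) ⊆ P := by
        intro x hx
        simp only [Set.mem_insert_iff, Set.mem_singleton_iff] at hx
        rcases hx with rfl | rfl | rfl | rfl | rfl
        · exact ma
        · exact mb
        · exact mc
        · exact mσ
        · exact mca
      have hPQ : ({a, b, c, c + (a+b), c + a} : Set G) = P :=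
        Set.eq_of_subset_of_ncard_le hQP (by rw [hQ5]; exact hcard) (Set.toFinite _)
      have hm : c + b ∈ ({a, b, c, c + (a+b), c + a} : Set G) := by rw [hPQ]; exact mcb
      simp only [Set.mem_insert_iff, Set.mem_singleton_iff] at hm
      have hcb2 : c + b = a := by
        rcases hm with h | h | h | h | h
        · exact h
        · exfalso; apply nzc
          have e : c = (c + b) - b := by abel
          rw [h] at e; simpa using e
        · exfalso; apply nzb
          have e : b = (c + b) - c := by abel
          rw [h] at e; simpa using e
        · exfalso; apply nza
          have e : a = (c + (a + b)) - (c + b) := by abel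
          rw [← h] at e; simpa using e
        · exact absurd (add_left_cancel h).symm hab
      have e2b : b + b = 0 := by
        have e1 : b + b = ((a + b) + b) - a := by abel
        rw [h1, hcb2] at e1; simpa using e1
      have eσ : c + (a + b) = a + a := by
        rw [← h1]
        have e1 : (a + b) + (a + b) = (a + a) + (b + b) := by abel
        rw [e1, e2b, add_zero]
      refine ⟨a, b, nza, nzb, ?_, ?_, ?_, ?_⟩
      · rw [two_nsmul, ← eσ]; exact nzσ
      · rw [two_nsmul]; exact e2b
      · rw [two_nsmul]
        intro h
        apply nzca
        rw [← h1]
        have e : (a + b) + a = a + a + b := by abel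
        rw [e, h]
      · show S = a ::ₘ b ::ₘ {a + b}
        rw [hS, ← h1]
        show (a+b) ::ₘ a ::ₘ b ::ₘ (0:Multiset G) = a ::ₘ b ::ₘ (a+b) ::ₘ 0
        exact rot3 (a+b) a b
  · -- Case C : g₁ = b, g₂ = c
    have dab_a : a + b ≠ a := fun h => nzb (by
      have e : b = (a + b) - a := by abel
      rw [h] at e; simpa using e)
    have dab_b : a + b ≠ b := fun h => nza (by
      have e : a = (a + b) - b := by abel
      rw [h] at e; simpa using e)
    have dab_σ : a + b ≠ c + (a + b) := fun h => nzc (by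
      have e : c = (c + (a + b)) - (a + b) := by abel
      rw [← h] at e; simpa using e)
    have hQ5 : ({a, b, c, c + (a+b), a + b} : Set G).ncard = 5 := by
      rw [Set.ncard_insert_of_notMem (by
          simp only [Set.mem_insert_iff, Set.mem_singleton_iff, not_or]
          exact ⟨hab, fun h => hca h.symm, fun h => dσa h.symm, fun h => dab_a h.symm⟩)
          (Set.toFinite _),
        Set.ncard_insert_of_notMem (by
          simp only [Set.mem_insert_iff, Set.mem_singleton_iff, not_or]
          exact ⟨fun h => hcb h.symm, fun h => dσb h.symm, fun h => dab_b h.symm⟩)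
          (Set.toFinite _),
        Set.ncard_insert_of_notMem (by
          simp only [Set.mem_insert_iff, Set.mem_singleton_iff, not_or]
          exact ⟨fun h => dσc h.symm, fun h => h1 h.symm⟩) (Set.toFinite _),
        Set.ncard_insert_of_notMem (by
          simp only [Set.mem_singleton_iff]
          exact fun h => dab_σ h.symm) (Set.toFinite _),
        Set.ncard_singleton]
    have hQP : ({a, b, c, c + (a+b), a + b} : Set G) ⊆ P := by
      intro x hx
      simp only [Set.mem_insert_iff, Set.mem_singleton_iff] at hx
      rcases hx with rfl | rfl | rfl | rfl | rfl
      · exact ma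
      · exact mb
      · exact mc
      · exact mσ
      · exact mab
    have hPQ : ({a, b, c, c + (a+b), a + b} : Set G) = P :=
      Set.eq_of_subset_of_ncard_le hQP (by rw [hQ5]; exact hcard) (Set.toFinite _)
    have hmca : c + a ∈ ({a, b, c, c + (a+b), a + b} : Set G) := by rw [hPQ]; exact mca
    have hmcb : c + b ∈ ({a, b, c, c + (a+b), a + b} : Set G) := by rw [hPQ]; exact mcb
    simp only [Set.mem_insert_iff, Set.mem_singleton_iff] at hmca hmcb
    have hca2 : c + a = b := by
      rcases hmca with h | h | h | h | h
      · exfalso; apply nzc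
        have e : c = (c + a) - a := by abel
        rw [h] at e; simpa using e
      · exact h
      · exfalso; apply nza
        have e : a = (c + a) - c := by abel
        rw [h] at e; simpa using e
      · exfalso; apply nzb
        have e : b = (c + (a+b)) - (c + a) := by abel
        rw [← h] at e; simpa using e
      · exfalso; apply hcb
        have e : c = b + ((c + a) - (a + b)) := by abel
        rw [h] at e; simpa using e
    have hcb2 : c + b = a := by
      rcases hmcb with h | h | h | h | h
      · exact h
      · exfalso; apply nzc
        have e : c = (c + b) - b := by abel
        rw [h] at e; simpa using e
      · exfalso; apply nzb
        have e : b = (c + b) - c := by abel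
        rw [h] at e; simpa using e
      · exfalso; apply nza
        have e : a = (c + (a+b)) - (c + b) := by abel
        rw [← h] at e; simpa using e
      · exfalso; apply hca
        have e : c = a + ((c + b) - (a + b)) := by abel
        rw [h] at e; simpa using e
    have e2c : c + c = 0 := by
      have e1 : c + c = ((c + a) + (c + b)) - (a + b) := by abel
      rw [hca2, hcb2] at e1
      have e2 : b + a = a + b := by abel
      rw [e2] at e1; simpa using e1
    have eσ : c + (a + b) = b + b := by
      rw [← hcb2]
      have e1 : c + ((c + b) + b) = (c + c) + (b + b) := by abel
      rw [e1, e2c, zero_add]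
    refine ⟨b, c, nzb, nzc, ?_, ?_, ?_, ?_⟩
    · rw [two_nsmul, ← eσ]; exact nzσ
    · rw [two_nsmul]; exact e2c
    · rw [two_nsmul]
      intro h
      apply nzab
      rw [← hcb2]
      have e : (c + b) + b = b + b + c := by abel
      rw [e, h]
    · show S = b ::ₘ c ::ₘ {b + c}
      rw [hS, add_comm b c, ← hcb2]
      show c ::ₘ (c+b) ::ₘ b ::ₘ (0:Multiset G) = b ::ₘ c ::ₘ (c+b) ::ₘ 0
      exact (rot3 b c (c+b)).symm


lemma quad_case {a b c : G}
    (h0 : (0:G) ∉ subSums (c ::ₘ a ::ₘ b ::ₘ ({a + b} : Multiset G)))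
    (haa : a + a ≠ 0) (hbb : b + b = 0) (hab2 : a + a + b ≠ 0)
    (hc1 : c ≠ a) (hc2 : c ≠ b) (hc3 : c ≠ a + b)
    (hcard : (subSums (c ::ₘ a ::ₘ b ::ₘ ({a + b} : Multiset G))).ncard ≤ 7) : False := by
  set S : Multiset G := c ::ₘ a ::ₘ b ::ₘ ({a + b} : Multiset G) with hS
  set P : Set G := subSums S with hPdef
  -- memberships
  have ma : a ∈ P := mem_subSums_of_mem (by simp [hS])
  have mb : b ∈ P := mem_subSums_of_mem (by simp [hS])
  have mab : a + b ∈ P := mem_subSums_of_mem (by simp [hS])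
  have mc : c ∈ P := mem_subSums_of_mem (by simp [hS])
  have hle1 : ({a + b} : Multiset G) ≤ b ::ₘ {a + b} := Multiset.le_cons_self _ _
  have maab : a + a + b ∈ P := by
    refine ⟨a ::ₘ {a + b}, ?_, by simp, by simp; abel⟩
    calc a ::ₘ {a + b} ≤ a ::ₘ b ::ₘ {a + b} := Multiset.cons_le_cons a hle1
    _ ≤ S := Multiset.le_cons_self _ c
  have maa : a + a ∈ P := by
    refine ⟨a ::ₘ b ::ₘ {a + b}, Multiset.le_cons_self _ c, by simp, ?_⟩
    simp only [Multiset.sum_cons, Multiset.sum_singleton]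
    have e : a + (b + (a + b)) = a + a + (b + b) := by abel
    rw [e, hbb, add_zero]
  have mca : c + a ∈ P := by
    refine ⟨c ::ₘ {a}, Multiset.cons_le_cons c (Multiset.singleton_le.mpr (by simp)), by simp,
      by simp⟩
  have mcb : c + b ∈ P := by
    refine ⟨c ::ₘ {b}, Multiset.cons_le_cons c (Multiset.singleton_le.mpr (by simp)), by simp,
      by simp⟩
  have mcab : c + (a + b) ∈ P := by
    refine ⟨c ::ₘ a ::ₘ {b}, ?_, by simp, by simp⟩
    refine Multiset.cons_le_cons c (Multiset.cons_le_cons a (Multiset.singleton_le.mpr (by simp)))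
  have mcaab : c + (a + a + b) ∈ P := by
    refine ⟨c ::ₘ a ::ₘ {a + b}, ?_, by simp, by simp; abel⟩
    refine Multiset.cons_le_cons c (Multiset.cons_le_cons a hle1)
  have mcaa : c + (a + a) ∈ P := by
    refine ⟨S, le_refl S, by simp [hS], ?_⟩
    simp only [hS, Multiset.sum_cons, Multiset.sum_singleton]
    have e : c + (a + (b + (a + b))) = c + (a + a) + (b + b) := by abel
    rw [e, hbb, add_zero]
  -- nonzero facts
  have nza : a ≠ 0 := ne_zero_of_mem_subSums h0 ma
  have nzb : b ≠ 0 := ne_zero_of_mem_subSums h0 mb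
  have nzc : c ≠ 0 := ne_zero_of_mem_subSums h0 mc
  have nzab : a + b ≠ 0 := ne_zero_of_mem_subSums h0 mab
  have nzca : c + a ≠ 0 := ne_zero_of_mem_subSums h0 mca
  have nzcb : c + b ≠ 0 := ne_zero_of_mem_subSums h0 mcb
  have nzcab : c + (a + b) ≠ 0 := ne_zero_of_mem_subSums h0 mcab
  have nzcaab : c + (a + a + b) ≠ 0 := ne_zero_of_mem_subSums h0 mcaab
  have nzcaa : c + (a + a) ≠ 0 := ne_zero_of_mem_subSums h0 mcaa
  -- y-distinctness
  have d12 : a ≠ b := by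
    intro h; apply haa; rw [h]; exact hbb
  have d13 : a ≠ a + b := by
    intro h; apply nzb
    have e : b = (a + b) - a := by abel
    rw [← h] at e; simpa using e
  have d14 : a ≠ a + a + b := by
    intro h; apply nzab
    have e : a + b = (a + a + b) - a := by abel
    rw [← h] at e; simpa using e
  have d15 : a ≠ a + a := by
    intro h; apply nza
    have e : a = (a + a) - a := by abel
    rw [← h] at e; simpa using e
  have d23 : b ≠ a + b := by
    intro h; apply nza
    have e : a = (a + b) - b := by abel
    rw [← h] at e; simpa using e
  have d24 : b ≠ a + a + b := by
    intro h; apply haa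
    have e : a + a = (a + a + b) - b := by abel
    rw [← h] at e; simpa using e
  have d25 : b ≠ a + a := by
    intro h; apply hab2
    have e : a + a + b = b + b := by rw [← h]
    rw [e, hbb]
  have d34 : a + b ≠ a + a + b := by
    intro h; apply nza
    have e : a = (a + a + b) - (a + b) := by abel
    rw [← h] at e; simpa using e
  have d35 : a + b ≠ a + a := by
    intro h; apply haa
    have e : b = a := by
      have e1 : b = (a + b) - a := by abel
      rw [h] at e1
      have e2 : (a + a) - a = a := by abel
      rw [e2] at e1; exact e1
    rw [← e, hbb]
  have d45 : a + a + b ≠ a + a := by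
    intro h; apply nzb
    have e : b = (a + a + b) - (a + a) := by abel
    rw [h] at e; simpa using e
  -- x vs y kills
  have k11 : c + a ≠ a := by
    intro h; apply nzc
    have e : c = (c + a) - a := by abel
    rw [h] at e; simpa using e
  have k12 : c + a ≠ b := by
    intro h; apply nzcab
    have e : c + (a + b) = (c + a) + b := by abel
    rw [e, h, hbb]
  have k13 : c + a ≠ a + b := by
    intro h; apply hc2
    have e : c = (a + b) - a := by rw [← h]; abel
    have e2 : (a + b) - a = b := by abel
    rw [e2] at e; exact e
  have k14 : c + a ≠ a + a + b := by
    intro h; apply hc3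
    have e : c = (a + a + b) - a := by rw [← h]; abel
    have e2 : (a + a + b) - a = a + b := by abel
    rw [e2] at e; exact e
  have k15 : c + a ≠ a + a := by
    intro h; apply hc1
    have e : c = (a + a) - a := by rw [← h]; abel
    have e2 : (a + a) - a = a := by abel
    rw [e2] at e; exact e
  have k21 : c + (a + b) ≠ a := by
    intro h; apply nzcb
    have e : c + b = (c + (a + b)) - a := by abel
    rw [h] at e; simpa using e
  have k22 : c + (a + b) ≠ b := by
    intro h; apply nzca
    have e : c + a = (c + (a + b)) - b := by abel
    rw [h] at e; simpa using e
  have k23 : c + (a + b) ≠ a + b := by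
    intro h; apply nzc
    have e : c = (c + (a + b)) - (a + b) := by abel
    rw [h] at e; simpa using e
  have k24 : c + (a + b) ≠ a + a + b := by
    intro h; apply hc1
    have e : c = (a + a + b) - (a + b) := by rw [← h]; abel
    have e2 : (a + a + b) - (a + b) = a := by abel
    rw [e2] at e; exact e
  have k25 : c + (a + b) ≠ a + a := by
    intro h; apply hc3
    have e : c = (a + a) - (a + b) := by rw [← h]; abel
    have e2 : (a + a) - (a + b) = (a + b) - (b + b) := by abel
    rw [e2, hbb, sub_zero] at e; exact e
  have k31 : c + (a + a + b) ≠ a := by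
    intro h; apply nzcab
    have e : c + (a + b) = (c + (a + a + b)) - a := by abel
    rw [h] at e; simpa using e
  have k32 : c + (a + a + b) ≠ b := by
    intro h; apply nzcaa
    have e : c + (a + a) = (c + (a + a + b)) - b := by abel
    rw [h] at e; simpa using e
  have k33 : c + (a + a + b) ≠ a + b := by
    intro h; apply nzca
    have e : c + a = (c + (a + a + b)) - (a + b) := by abel
    rw [h] at e; simpa using e
  have k34 : c + (a + a + b) ≠ a + a + b := by
    intro h; apply nzc
    have e : c = (c + (a + a + b)) - (a + a + b) := by abel
    rw [h] at e; simpa using e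
  have k35 : c + (a + a + b) ≠ a + a := by
    intro h; apply nzcb
    have e : c + b = (c + (a + a + b)) - (a + a) := by abel
    rw [h] at e; simpa using e
  have k41 : c + (a + a) ≠ a := by
    intro h; apply nzca
    have e : c + a = (c + (a + a)) - a := by abel
    rw [h] at e; simpa using e
  have k42 : c + (a + a) ≠ b := by
    intro h; apply nzcaab
    have e : c + (a + a + b) = (c + (a + a)) + b := by abel
    rw [e, h, hbb]
  have k43 : c + (a + a) ≠ a + b := by
    intro h; apply nzcab
    have e : c + (a + b) = (c + (a + a)) + (b + b) - (a + b) := by abel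
    rw [h, hbb] at e
    have e2 : (a + b) + 0 - (a + b) = 0 := by abel
    rw [e2] at e; exact e
  have k44 : c + (a + a) ≠ a + a + b := by
    intro h; apply hc2
    have e : c = (a + a + b) - (a + a) := by rw [← h]; abel
    have e2 : (a + a + b) - (a + a) = b := by abel
    rw [e2] at e; exact e
  have k45 : c + (a + a) ≠ a + a := by
    intro h; apply nzc
    have e : c = (c + (a + a)) - (a + a) := by abel
    rw [h] at e; simpa using e
  -- x-pair distinctness
  have x12 : c + a ≠ c + (a + b) := fun h => d13 (add_left_cancel h)
  have x13 : c + a ≠ c + (a + a + b) := fun h => d14 (add_left_cancel h)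
  have x14 : c + a ≠ c + (a + a) := fun h => d15 (add_left_cancel h)
  have x23 : c + (a + b) ≠ c + (a + a + b) := fun h => d34 (add_left_cancel h)
  have x24 : c + (a + b) ≠ c + (a + a) := fun h => d35 (add_left_cancel h)
  have x34 : c + (a + a + b) ≠ c + (a + a) := fun h => d45 (add_left_cancel h)
  -- the 9-element subset
  set Q : Set G := {a, b, a + b, a + a + b, a + a, c + a, c + (a + b), c + (a + a + b),
    c + (a + a)} with hQ
  have hQP : Q ⊆ P := by
    intro x hx
    simp only [hQ, Set.mem_insert_iff, Set.mem_singleton_iff] at hx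
    rcases hx with rfl | rfl | rfl | rfl | rfl | rfl | rfl | rfl | rfl
    · exact ma
    · exact mb
    · exact mab
    · exact maab
    · exact maa
    · exact mca
    · exact mcab
    · exact mcaab
    · exact mcaa
  have hQ9 : Q.ncard = 9 := by
    rw [hQ]
    rw [Set.ncard_insert_of_notMem (by
      simp only [Set.mem_insert_iff, Set.mem_singleton_iff, not_or]
      exact ⟨d12, d13, d14, d15, fun h => k11 h.symm, fun h => k21 h.symm,
        fun h => k31 h.symm, fun h => k41 h.symm⟩) (Set.toFinite _)]
    rw [Set.ncard_insert_of_notMem (by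
      simp only [Set.mem_insert_iff, Set.mem_singleton_iff, not_or]
      exact ⟨d23, d24, d25, fun h => k12 h.symm, fun h => k22 h.symm,
        fun h => k32 h.symm, fun h => k42 h.symm⟩) (Set.toFinite _)]
    rw [Set.ncard_insert_of_notMem (by
      simp only [Set.mem_insert_iff, Set.mem_singleton_iff, not_or]
      exact ⟨d34, d35, fun h => k13 h.symm, fun h => k23 h.symm,
        fun h => k33 h.symm, fun h => k43 h.symm⟩) (Set.toFinite _)]
    rw [Set.ncard_insert_of_notMem (by
      simp only [Set.mem_insert_iff, Set.mem_singleton_iff, not_or]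
      exact ⟨d45, fun h => k14 h.symm, fun h => k24 h.symm,
        fun h => k34 h.symm, fun h => k44 h.symm⟩) (Set.toFinite _)]
    rw [Set.ncard_insert_of_notMem (by
      simp only [Set.mem_insert_iff, Set.mem_singleton_iff, not_or]
      exact ⟨fun h => k15 h.symm, fun h => k25 h.symm,
        fun h => k35 h.symm, fun h => k45 h.symm⟩) (Set.toFinite _)]
    rw [Set.ncard_insert_of_notMem (by
      simp only [Set.mem_insert_iff, Set.mem_singleton_iff, not_or]
      exact ⟨x12, x13, x14⟩) (Set.toFinite _)]
    rw [Set.ncard_insert_of_notMem (by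
      simp only [Set.mem_insert_iff, Set.mem_singleton_iff, not_or]
      exact ⟨x23, x24⟩) (Set.toFinite _)]
    rw [Set.ncard_insert_of_notMem (by
      simp only [Set.mem_singleton_iff]
      exact x34) (Set.toFinite _)]
    rw [Set.ncard_singleton]
  have : (9 : ℕ) ≤ 7 := by
    calc (9:ℕ) = Q.ncard := hQ9.symm
    _ ≤ P.ncard := Set.ncard_le_ncard hQP (Set.toFinite _)
    _ ≤ 7 := hcard
  omega

lemma main_aux : ∀ (N : ℕ) (S : Multiset G), Multiset.card S ≤ N → (0:G) ∉ subSums S →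
    (subSums S).ncard + 1 = Multiset.card S + S.toFinset.card →
    (∃ g : G, g ≠ 0 ∧ S = Multiset.replicate (Multiset.card S) g ∧
        Multiset.card S + 1 ≤ addOrderOf g) ∨
    (∃ g₁ g₂ : G, g₁ ≠ 0 ∧ g₂ ≠ 0 ∧ g₁ ≠ g₂ ∧ S = ({g₁, g₂} : Multiset G)) ∨
    (∃ g : G, g ≠ 0 ∧ 3 ≤ Multiset.card S ∧
        S = Multiset.replicate (Multiset.card S - 1) g + {2 • g} ∧
        Multiset.card S + 2 ≤ addOrderOf g) ∨
    (∃ g₁ g₂ : G, g₁ ≠ 0 ∧ g₂ ≠ 0 ∧ 2 • g₁ ≠ 0 ∧ 2 • g₂ = 0 ∧ 2 • g₁ + g₂ ≠ 0 ∧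
        S = ({g₁, g₂, g₁ + g₂} : Multiset G)) := by
  intro N
  induction N with
  | zero =>
      intro S hN h0 heq
      have hS0 : S = 0 := by rw [← Multiset.card_eq_zero]; omega
      subst hS0
      rw [subSums_zero, Set.ncard_empty] at heq
      simp at heq
  | succ N ih =>
      intro S hN h0 heq
      rcases Nat.lt_or_ge S.toFinset.card 2 with hklt | hk2
      · rcases Nat.lt_or_ge S.toFinset.card 1 with hk0 | hk1
        · -- k = 0 : S = 0
          have hS0 : S = 0 := by
            rw [← Multiset.toFinset_eq_empty]
            exact Finset.card_eq_zero.mp (by omega)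
          subst hS0
          rw [subSums_zero, Set.ncard_empty] at heq
          simp at heq
        · -- k = 1 : replicate
          have hk1' : S.toFinset.card = 1 := by omega
          obtain ⟨g, hg⟩ := eq_replicate_of_toFinset_card_one hk1'
          have hn1 : 1 ≤ Multiset.card S := by
            by_contra h
            have : S = 0 := by rw [← Multiset.card_eq_zero]; omega
            rw [this] at hk1'; simp at hk1'
          have hgS : g ∈ S := by
            rw [hg]; exact Multiset.mem_replicate.mpr ⟨by omega, rfl⟩
          have hgne : g ≠ 0 := ne_zero_of_mem_subSums h0 (mem_subSums_of_mem hgS)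
          have hord : Multiset.card S + 1 ≤ addOrderOf g := by
            by_contra h
            push_neg at h
            have hd : 0 < addOrderOf g := addOrderOf_pos g
            have : (addOrderOf g) • g ∈ subSums S := by
              rw [hg]; exact nsmul_mem_subSums (by omega) (by omega)
            rw [addOrderOf_nsmul_eq_zero g] at this
            exact h0 this
          exact Or.inl ⟨g, hgne, hg, hord⟩
      · -- k ≥ 2
        obtain ⟨a, ha, b, hb, hab⟩ := Finset.one_lt_card.mp hk2
        have haS : a ∈ S := Multiset.mem_toFinset.mp ha
        have hbS : b ∈ S := Multiset.mem_toFinset.mp hb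
        obtain ⟨c, -, hcS, x, hx, hxσ, hxe⟩ := pair_lemma h0 haS hbS hab
        have h0' : (0:G) ∉ subSums (S.erase c) :=
          fun h => h0 (subSums_mono (Multiset.erase_le c S) h)
        have h2 := ncard_erase_add_two h0 hcS hx hxσ hxe
        have hbound := card_bound (Multiset.card (S.erase c)) (S.erase c) le_rfl h0'
        have hkk' : S.toFinset.card ≤ (S.erase c).toFinset.card + 1 := erase_toFinset_card hcS
        have hk'k : (S.erase c).toFinset.card ≤ S.toFinset.card :=
          Finset.card_le_card (fun y hy => Multiset.mem_toFinset.mpr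
            (Multiset.mem_of_mem_erase (Multiset.mem_toFinset.mp hy)))
        have hcarde : Multiset.card (S.erase c) = Multiset.card S - 1 :=
          Multiset.card_erase_of_mem hcS
        have hpos : 0 < Multiset.card S := Multiset.card_pos_iff_exists_mem.mpr ⟨c, hcS⟩
        have hkn : S.toFinset.card ≤ Multiset.card S := Multiset.toFinset_card_le S
        -- forced equalities
        have heq' : (subSums (S.erase c)).ncard + 1
            = Multiset.card (S.erase c) + (S.erase c).toFinset.card := by omega
        have hk' : (S.erase c).toFinset.card = S.toFinset.card - 1 := by omega
        have hncS : (subSums S).ncard + 1 = Multiset.card S + S.toFinset.card := heq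
        -- count c S = 1
        have hcount : S.count c = 1 := by
          by_contra h
          have hc1 : 1 ≤ S.count c := Multiset.count_pos.mpr hcS
          have hc2' : 2 ≤ S.count c := by omega
          have hcerase : c ∈ S.erase c := by
            rw [← Multiset.count_pos, Multiset.count_erase_self]
            omega
          have : S.toFinset ⊆ (S.erase c).toFinset := by
            intro y hy
            rcases eq_or_ne y c with rfl | hyc
            · exact Multiset.mem_toFinset.mpr hcerase
            · exact Multiset.mem_toFinset.mpr
                ((Multiset.mem_erase_of_ne hyc).mpr (Multiset.mem_toFinset.mp hy))
          have := Finset.card_le_card this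
          omega
        have hScons : c ::ₘ S.erase c = S := Multiset.cons_erase hcS
        rcases Nat.lt_or_ge (Multiset.card S) 3 with hn2 | hn3
        · -- n = 2, k = 2 : form 2
          have hn2' : Multiset.card S = 2 := by omega
          have hcard1 : Multiset.card (S.erase c) = 1 := by omega
          obtain ⟨y, hy⟩ := Multiset.card_eq_one.mp hcard1
          have hSform : S = c ::ₘ ({y} : Multiset G) := by rw [← hScons, hy]
          have hyS : y ∈ S := by rw [hSform]; simp
          have hcy : c ≠ y := by
            intro h
            rw [hSform, ← h] at hcount
            rw [Multiset.count_cons_self] at hcount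
            simp at hcount
          exact Or.inr (Or.inl ⟨c, y, ne_zero_of_mem_subSums h0 (mem_subSums_of_mem hcS),
            ne_zero_of_mem_subSums h0 (mem_subSums_of_mem hyS), hcy, hSform⟩)
        · -- n ≥ 3 : use IH on S.erase c
          have hle : Multiset.card (S.erase c) ≤ N := by omega
          rcases ih (S.erase c) hle h0' heq' with hF1 | hF2 | hF3 | hF4
          · -- S.erase c = replicate m g
            obtain ⟨g, hgne, hrep, hordg⟩ := hF1
            set m := Multiset.card (S.erase c) with hmdef
            have hm2 : 2 ≤ m := by omega
            have h' : ∀ x : G, x ∈ subSums (S.erase c) ↔ ∃ i, 1 ≤ i ∧ i ≤ m ∧ x = i • g := by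
              intro x
              rw [hrep]
              exact mem_subSums_replicate
            have hP := hP_combine (g := g) (c := c) (S' := S.erase c) (M := m) h'
            have hk'1 : (S.erase c).toFinset.card = 1 := by
              rw [hrep, Multiset.toFinset_replicate]
              simp only [if_neg (by omega : ¬ m = 0)]
              exact Finset.card_singleton g
            have hcardP : (subSums (c ::ₘ S.erase c)).ncard = m + 2 := by
              rw [hScons]; omega
            have hSP : (0:G) ∉ subSums (c ::ₘ S.erase c) := by rw [hScons]; exact h0
            obtain ⟨hc2g, hordg2⟩ := interval_lemma hm2 hP hSP hcardP
            refine Or.inr (Or.inr (Or.inl ⟨g, hgne, by omega, ?_, by omega⟩))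
            rw [add_comm, Multiset.singleton_add, ← hc2g]
            have hmm : Multiset.card S - 1 = m := by omega
            rw [hmm, ← hrep, hScons]
          · -- S.erase c = {g₁, g₂}
            obtain ⟨g₁, g₂, hg₁, hg₂, hg₁₂, hpair⟩ := hF2
            have hcne : ∀ z ∈ S.erase c, c ≠ z := by
              intro z hz h
              have : c ∈ S.erase c := h ▸ hz
              have h1 : 1 ≤ Multiset.count c (S.erase c) := Multiset.count_pos.mpr this
              have := Multiset.count_erase_self c S
              have h2 : 1 ≤ Multiset.count c S := Multiset.count_pos.mpr hcS
              omega
            have hc1' : c ≠ g₁ := hcne g₁ (by rw [hpair]; simp)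
            have hc2' : c ≠ g₂ := hcne g₂ (by rw [hpair]; simp)
            have hcard5 : (subSums (c ::ₘ g₁ ::ₘ ({g₂} : Multiset G))).ncard ≤ 5 := by
              have hSform : c ::ₘ g₁ ::ₘ ({g₂} : Multiset G) = S := by
                rw [← hScons, hpair]; rfl
              rw [hSform]
              have hcard2 : Multiset.card (S.erase c) = 2 := by rw [hpair]; rfl
              omega
            have hS0' : (0:G) ∉ subSums (c ::ₘ g₁ ::ₘ ({g₂} : Multiset G)) := by
              have hSform : c ::ₘ g₁ ::ₘ ({g₂} : Multiset G) = S := by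
                rw [← hScons, hpair]; rfl
              rw [hSform]; exact h0
            obtain ⟨G₁, G₂, w1, w2, w3, w4, w5, w6⟩ :=
              triple_case hS0' hg₁₂ hc1' hc2' hcard5
            refine Or.inr (Or.inr (Or.inr ⟨G₁, G₂, w1, w2, w3, w4, w5, ?_⟩))
            rw [← hScons, hpair]
            exact w6
          · -- S.erase c = replicate (m-1) g + {2•g} : contradiction
            exfalso
            obtain ⟨g, hgne, hm3, hrep, hordg⟩ := hF3
            set m := Multiset.card (S.erase c) with hmdef
            have hrep' : S.erase c = (2 • g) ::ₘ Multiset.replicate (m - 1) g := by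
              rw [hrep, add_comm, Multiset.singleton_add]
            have hm1 : 1 ≤ m - 1 := by omega
            have h' : ∀ x : G, x ∈ subSums (S.erase c) ↔
                ∃ i, 1 ≤ i ∧ i ≤ (m - 1) + 2 ∧ x = i • g := by
              intro x
              rw [hrep']
              exact mem_subSums_rep2 hm1
            have hP := hP_combine (g := g) (c := c) (S' := S.erase c)
              (M := (m - 1) + 2) h'
            have hg2g : (2:ℕ) • g ≠ g := by
              intro h
              apply hgne
              rw [two_nsmul] at h
              have e : g = (g + g) - g := by abel
              rw [h] at e; simpa using e
            have hk'2 : (S.erase c).toFinset.card = 2 := by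
              rw [hrep', Multiset.toFinset_cons, Multiset.toFinset_replicate]
              simp only [if_neg (by omega : ¬ m - 1 = 0)]
              rw [Finset.card_insert_of_notMem (by simp [hg2g])]
              rfl
            have hcardP : (subSums (c ::ₘ S.erase c)).ncard
                = ((m - 1) + 2) + 2 := by
              rw [hScons]; omega
            have hSP : (0:G) ∉ subSums (c ::ₘ S.erase c) := by rw [hScons]; exact h0
            obtain ⟨hc2g, -⟩ := interval_lemma (by omega) hP hSP hcardP
            -- c = 2•g but 2•g ∈ S.erase c, contradicting count c S = 1
            have : c ∈ S.erase c := by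
              rw [hrep', hc2g]; simp
            have h1 : 1 ≤ Multiset.count c (S.erase c) := Multiset.count_pos.mpr this
            have := Multiset.count_erase_self c S
            omega
          · -- S.erase c = {g₁, g₂, g₁+g₂} : contradiction
            exfalso
            obtain ⟨g₁, g₂, hg₁, hg₂, h2g₁, h2g₂, h2g₁₂, hquad⟩ := hF4
            have hcne : ∀ z ∈ S.erase c, c ≠ z := by
              intro z hz h
              have : c ∈ S.erase c := h ▸ hz
              have h1 : 1 ≤ Multiset.count c (S.erase c) := Multiset.count_pos.mpr this
              have := Multiset.count_erase_self c S
              have h2 : 1 ≤ Multiset.count c S := Multiset.count_pos.mpr hcS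
              omega
            have hc1' : c ≠ g₁ := hcne g₁ (by rw [hquad]; simp)
            have hc2' : c ≠ g₂ := hcne g₂ (by rw [hquad]; simp)
            have hc3' : c ≠ g₁ + g₂ := hcne (g₁ + g₂) (by rw [hquad]; simp)
            have hSform : c ::ₘ g₁ ::ₘ g₂ ::ₘ ({g₁ + g₂} : Multiset G) = S := by
              rw [← hScons, hquad]; rfl
            have hcard4 : Multiset.card (S.erase c) = 3 := by rw [hquad]; rfl
            have hcard7 : (subSums (c ::ₘ g₁ ::ₘ g₂ ::ₘ ({g₁ + g₂} : Multiset G))).ncard ≤ 7 := by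
              rw [hSform]; omega
            have hS0' : (0:G) ∉ subSums (c ::ₘ g₁ ::ₘ g₂ ::ₘ ({g₁ + g₂} : Multiset G)) := by
              rw [hSform]; exact h0
            exact quad_case hS0' (by rwa [two_nsmul] at h2g₁) (by rwa [two_nsmul] at h2g₂)
              (by rwa [two_nsmul] at h2g₁₂) hc1' hc2' hc3' hcard7

end Main

theorem stmt8 {G : Type*} [AddCommGroup G] [Fintype G] [DecidableEq G]
    (S : Multiset G) (h0 : (0 : G) ∉ subSums S)
    (heq : (subSums S).ncard + 1 = Multiset.card S + S.toFinset.card) :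
    (∃ g : G, g ≠ 0 ∧ S = Multiset.replicate (Multiset.card S) g ∧
        Multiset.card S + 1 ≤ addOrderOf g) ∨
    (∃ g₁ g₂ : G, g₁ ≠ 0 ∧ g₂ ≠ 0 ∧ g₁ ≠ g₂ ∧ S = ({g₁, g₂} : Multiset G)) ∨
    (∃ g : G, g ≠ 0 ∧ 3 ≤ Multiset.card S ∧
        S = Multiset.replicate (Multiset.card S - 1) g + {2 • g} ∧
        Multiset.card S + 2 ≤ addOrderOf g) ∨
    (∃ g₁ g₂ : G, g₁ ≠ 0 ∧ g₂ ≠ 0 ∧ 2 • g₁ ≠ 0 ∧ 2 • g₂ = 0 ∧ 2 • g₁ + g₂ ≠ 0 ∧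
        S = ({g₁, g₂, g₁ + g₂} : Multiset G)) :=
  main_aux (Multiset.card S) S le_rfl h0 heq
end

section
/- Let G be a finite abelian group and g₁, g₂ ∈ G∖{0} with 2g₁ ≠ 0, 2g₂ = 0, and 2g₁ + g₂ ≠ 0. Then the sequence S = g₁·g₂·(g₁+g₂) is zero-sum free and |Σ(S)| = 5 = |S| + |supp(S)| − 1. -/
/-!
Peeling off one term at a time, `Σ(a · T) = {a} ∪ Σ(T) ∪ (a + Σ(T))`. For `S = g₁ · g₂ · (g₁ + g₂)`,
the relation `2 g₂ = 0` collapses `g₂ + (g₁ + g₂)` to `g₁` and the total sum to `2 g₁`, so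
`Σ(S) = {g₁, g₂, g₁ + g₂, 2 g₁ + g₂, 2 g₁}`; the hypotheses make these five elements and `0`
pairwise distinct.
-/

section AddCommMonoid
variable {G : Type*} [AddCommMonoid G]

theorem subSums_cons_s10 (a : G) (S : Multiset G) :
    subSums (a ::ₘ S) = insert a (subSums S ∪ (a + ·) '' subSums S) := by
  ext x
  simp only [subSums, ← Multiset.mem_powerset, Multiset.powerset_cons, Multiset.mem_add,
    Multiset.mem_map, Set.mem_insert_iff, Set.mem_union, Set.mem_image, Set.mem_ofPred_eq]
  constructor
  · rintro ⟨T, hT | ⟨U, hU, rfl⟩, hT0, rfl⟩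
    · exact Or.inr (Or.inl ⟨T, hT, hT0, rfl⟩)
    · rcases eq_or_ne U 0 with rfl | hU0
      · simp
      · exact Or.inr (Or.inr ⟨U.sum, ⟨U, hU, hU0, rfl⟩, (Multiset.sum_cons a U).symm⟩)
  · rintro (rfl | ⟨T, hT, hT0, rfl⟩ | ⟨_, ⟨U, hU, -, rfl⟩, rfl⟩)
    · exact ⟨{x}, Or.inr ⟨0, Multiset.zero_mem_powerset S, rfl⟩, by simp, by simp⟩
    · exact ⟨T, Or.inl hT, hT0, rfl⟩
    · exact ⟨a ::ₘ U, Or.inr ⟨U, hU, rfl⟩, Multiset.cons_ne_zero, Multiset.sum_cons a U⟩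

theorem subSums_singleton (a : G) : subSums ({a} : Multiset G) = {a} := by
  ext x
  simp [subSums, Multiset.le_singleton]

end AddCommMonoid

section AddCommGroup
variable {G : Type*} [AddCommGroup G] {g₁ g₂ : G}

theorem subSums_eq_of_two_nsmul_eq_zero (h : 2 • g₂ = 0) :
    subSums ({g₁, g₂, g₁ + g₂} : Multiset G) = {g₁, g₂, g₁ + g₂, 2 • g₁ + g₂, 2 • g₁} := by
  have h₂₃ : g₂ + (g₁ + g₂) = g₁ := by
    rw [add_left_comm, ← two_nsmul, h, add_zero]
  have h₁₃ : g₁ + (g₁ + g₂) = 2 • g₁ + g₂ := by rw [two_nsmul, add_assoc]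
  ext x
  simp only [Multiset.insert_eq_cons, subSums_cons_s10, subSums_singleton, Set.image_insert_eq,
    Set.image_singleton, Set.image_union, h₂₃, h₁₃, ← two_nsmul, Set.mem_insert_iff,
    Set.mem_singleton_iff, Set.mem_union]
  tauto

theorem nodup_zero_cons_subSums_values (h1 : g₁ ≠ 0) (h2 : g₂ ≠ 0)
    (h3 : 2 • g₁ ≠ 0) (h4 : 2 • g₂ = 0) (h5 : 2 • g₁ + g₂ ≠ 0) :
    [0, g₁, g₂, g₁ + g₂, 2 • g₁ + g₂, 2 • g₁].Nodup := by
  have hne : g₁ ≠ g₂ := by grind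
  have hsum : g₁ + g₂ ≠ 0 := by grind
  simp only [List.nodup_cons, List.mem_cons, List.not_mem_nil, or_false, not_or, List.nodup_nil,
    and_true]
  refine ⟨⟨?_, ?_, ?_, ?_, ?_⟩, ⟨?_, ?_, ?_, ?_⟩, ⟨?_, ?_, ?_⟩, ⟨?_, ?_⟩, ?_⟩
  all_goals grind [two_nsmul, left_eq_add, add_eq_left]

end AddCommGroup

theorem stmt10_general {G : Type*} [AddCommGroup G] [DecidableEq G]
    (g₁ g₂ : G) (h1 : g₁ ≠ 0) (h2 : g₂ ≠ 0)
    (h3 : 2 • g₁ ≠ 0) (h4 : 2 • g₂ = 0) (h5 : 2 • g₁ + g₂ ≠ 0)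
    (S : Multiset G) (hS : S = ({g₁, g₂, g₁ + g₂} : Multiset G)) :
    (0 : G) ∉ subSums S ∧ (subSums S).ncard = 5 ∧
      (subSums S).ncard + 1 = Multiset.card S + S.toFinset.card := by
  subst hS
  have hnodup := nodup_zero_cons_subSums_values h1 h2 h3 h4 h5
  have hsums : subSums ({g₁, g₂, g₁ + g₂} : Multiset G) =
      ↑[g₁, g₂, g₁ + g₂, 2 • g₁ + g₂, 2 • g₁].toFinset := by
    rw [subSums_eq_of_two_nsmul_eq_zero h4]
    simp
  obtain ⟨hzero, hvalues⟩ := List.nodup_cons.1 hnodup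
  have hcard : (subSums ({g₁, g₂, g₁ + g₂} : Multiset G)).ncard = 5 := by
    rw [hsums, Set.ncard_coe_finset, List.toFinset_card_of_nodup hvalues]
    rfl
  have hsupp : ({g₁, g₂, g₁ + g₂} : Multiset G).toFinset.card = 3 :=
    Multiset.toFinset_card_of_nodup (hvalues.sublist (by simp) : [g₁, g₂, g₁ + g₂].Nodup)
  refine ⟨?_, hcard, ?_⟩
  · rwa [hsums, Finset.mem_coe, List.mem_toFinset]
  · rw [hcard, hsupp]
    rfl

theorem stmt10 {G : Type*} [AddCommGroup G] [Fintype G] [DecidableEq G]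
    (g₁ g₂ : G) (h1 : g₁ ≠ 0) (h2 : g₂ ≠ 0)
    (h3 : 2 • g₁ ≠ 0) (h4 : 2 • g₂ = 0) (h5 : 2 • g₁ + g₂ ≠ 0)
    (S : Multiset G) (hS : S = ({g₁, g₂, g₁ + g₂} : Multiset G)) :
    (0 : G) ∉ subSums S ∧ (subSums S).ncard = 5 ∧
      (subSums S).ncard + 1 = Multiset.card S + S.toFinset.card :=
  stmt10_general g₁ g₂ h1 h2 h3 h4 h5 S hS
end
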